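/- Let α, β > −1 with max(α,β) ≥ −1/2. Then the sequence of sup-norms of the normalized Jacobi polynomials is slowly increasing: there exist constants C > 0 and k ∈ ℕ such that max_{t∈[−1,1]} |p_n^{(α,β)}(t)| ≤ C(1+n)^k for all n ∈ ℕ₀. -/

import Mathlib

open scoped ENNReal

noncomputable section

/-- The Jacobi polynomial `P_n^{(α,β)}`, via the Rodrigues formula
`P_n^{(α,β)}(t) = ((-1)^n / (2^n n!)) (1-t)^{-α} (1+t)^{-β} (d/dt)^n [(1-t)^{n+α}(1+t)^{n+β}]`;
it satisfies the standardisation `P_n^{(α,β)}(1) = C(n+α, n)`. -/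
def jacobiP (α β : ℝ) (n : ℕ) (t : ℝ) : ℝ :=
  ((-1 : ℝ) ^ n / ((2 : ℝ) ^ n * (n.factorial : ℝ))) * (1 - t) ^ (-α) * (1 + t) ^ (-β) *
    iteratedDeriv n (fun s : ℝ => (1 - s) ^ (α + n) * (1 + s) ^ (β + n)) t

/-- The normalised Jacobi polynomial
`p_n^{(α,β)} = [ (2n+α+β+1) Γ(n+α+β+1) n! / (2^{α+β+1} Γ(n+α+1) Γ(n+β+1)) ]^{1/2} P_n^{(α,β)}`,
an orthonormal basis of `L²([-1,1], w_{(α,β)} dt)`. -/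
def jacobip (α β : ℝ) (n : ℕ) (t : ℝ) : ℝ :=
  Real.sqrt ((2 * n + α + β + 1) * Real.Gamma (n + α + β + 1) * (n.factorial : ℝ) /
      ((2 : ℝ) ^ (α + β + 1) * Real.Gamma (n + α + 1) * Real.Gamma (n + β + 1))) *
    jacobiP α β n t

namespace Stmt13
open Finset

/-- falling factorial product -/
def ff (a : ℝ) (k : ℕ) : ℝ := ∏ j ∈ Finset.range k, (a - j)

/-- m-th derivative of (1-t)^a (1+t)^b -/
def Phi (a b : ℝ) (m : ℕ) (t : ℝ) : ℝ :=
  ∑ k ∈ Finset.range (m+1), (m.choose k : ℝ) * ((-1)^k * ff a k) * ff b (m-k) *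
    (1-t) ^ (a - (k:ℝ)) * (1+t) ^ (b - ((m-k : ℕ):ℝ))

lemma ff_succ (a : ℝ) (k : ℕ) : ff a (k+1) = ff a k * (a - k) := Finset.prod_range_succ _ _

lemma hasDerivAt_one_sub_rpow {t : ℝ} (h1 : (0:ℝ) < 1 - t) (p : ℝ) :
    HasDerivAt (fun s => (1-s) ^ p) (-(p * (1-t)^(p-1))) t := by
  have h := (Real.hasDerivAt_rpow_const (x := 1 - t) (p := p) (Or.inl h1.ne')).comp t
    (((hasDerivAt_id t).const_sub 1))
  simpa [mul_comm, Function.comp_def] using h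

lemma hasDerivAt_one_add_rpow {t : ℝ} (h2 : (0:ℝ) < 1 + t) (p : ℝ) :
    HasDerivAt (fun s => (1+s) ^ p) (p * (1+t)^(p-1)) t := by
  have h := (Real.hasDerivAt_rpow_const (x := 1 + t) (p := p) (Or.inl h2.ne')).comp t
    (((hasDerivAt_id t).const_add 1))
  simpa [Function.comp_def] using h

lemma phi_hasDerivAt (a b : ℝ) (m : ℕ) {t : ℝ} (h1 : (0:ℝ) < 1 - t) (h2 : (0:ℝ) < 1 + t) :
    HasDerivAt (Phi a b m) (Phi a b (m+1) t) t := by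
  have key : HasDerivAt (Phi a b m)
      (∑ k ∈ Finset.range (m+1),
        ((m.choose k : ℝ) * ((-1)^k * ff a k) * ff b (m-k) *
          (-((a - (k:ℝ)) * (1-t)^(a - (k:ℝ) - 1))) * (1+t) ^ (b - ((m-k : ℕ):ℝ))
        + (m.choose k : ℝ) * ((-1)^k * ff a k) * ff b (m-k) *
          (1-t) ^ (a - (k:ℝ)) * ((b - ((m-k : ℕ):ℝ)) * (1+t)^(b - ((m-k : ℕ):ℝ) - 1)))) t := by
    apply HasDerivAt.fun_sum
    intro k _
    have hd := ((hasDerivAt_one_sub_rpow h1 (a - (k:ℝ))).const_mul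
        ((m.choose k : ℝ) * ((-1)^k * ff a k) * ff b (m-k))).fun_mul
        (hasDerivAt_one_add_rpow h2 (b - ((m-k : ℕ):ℝ)))
    convert hd using 1
  have hsum : (∑ k ∈ Finset.range (m+1),
        ((m.choose k : ℝ) * ((-1)^k * ff a k) * ff b (m-k) *
          (-((a - (k:ℝ)) * (1-t)^(a - (k:ℝ) - 1))) * (1+t) ^ (b - ((m-k : ℕ):ℝ))
        + (m.choose k : ℝ) * ((-1)^k * ff a k) * ff b (m-k) *
          (1-t) ^ (a - (k:ℝ)) * ((b - ((m-k : ℕ):ℝ)) * (1+t)^(b - ((m-k : ℕ):ℝ) - 1))))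
      = Phi a b (m+1) t := by
    rw [Finset.sum_add_distrib]
    -- RHS: split with Pascal
    have hG : Phi a b (m+1) t
        = (∑ k ∈ Finset.range (m+2), (m.choose k : ℝ) * ((-1)^k * ff a k) * ff b (m+1-k) *
            (1-t) ^ (a - (k:ℝ)) * (1+t) ^ (b - ((m+1-k : ℕ):ℝ)))
        + ∑ k ∈ Finset.range (m+1), (m.choose k : ℝ) * ((-1)^(k+1) * ff a (k+1)) * ff b (m-k) *
            (1-t) ^ (a - ((k+1:ℕ):ℝ)) * (1+t) ^ (b - ((m-k : ℕ):ℝ)) := by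
      unfold Phi
      rw [Finset.sum_range_succ' (n := m+1), Finset.sum_range_succ' (f := fun k =>
        (m.choose k : ℝ) * ((-1)^k * ff a k) * ff b (m+1-k) *
            (1-t) ^ (a - (k:ℝ)) * (1+t) ^ (b - ((m+1-k : ℕ):ℝ))) (n := m+1)]
      have : ∀ k ∈ Finset.range (m+1),
          ((m+1).choose (k+1) : ℝ) * ((-1)^(k+1) * ff a (k+1)) * ff b (m+1-(k+1)) *
            (1-t) ^ (a - ((k+1:ℕ):ℝ)) * (1+t) ^ (b - ((m+1-(k+1) : ℕ):ℝ))
          = ((m.choose (k+1) : ℝ) * ((-1)^(k+1) * ff a (k+1)) * ff b (m+1-(k+1)) *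
            (1-t) ^ (a - ((k+1:ℕ):ℝ)) * (1+t) ^ (b - ((m+1-(k+1) : ℕ):ℝ))
           + (m.choose k : ℝ) * ((-1)^(k+1) * ff a (k+1)) * ff b (m-k) *
            (1-t) ^ (a - ((k+1:ℕ):ℝ)) * (1+t) ^ (b - ((m-k : ℕ):ℝ))) := by
        intro k hk
        have hms : m + 1 - (k+1) = m - k := by omega
        rw [hms, Nat.choose_succ_succ m k]
        push_cast
        ring
      rw [Finset.sum_congr rfl this, Finset.sum_add_distrib]
      simp only [Nat.choose_zero_right]
      ring
    rw [hG, add_comm]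
    congr 1
    · -- B k sum equals the Ga sum over range (m+2)
      conv_rhs => rw [Finset.sum_range_succ]
      have hz : (m.choose (m+1) : ℝ) = 0 := by
        simp [Nat.choose_eq_zero_of_lt]
      rw [hz]
      rw [zero_mul, zero_mul, zero_mul, zero_mul, add_zero]
      apply Finset.sum_congr rfl
      intro k hk
      simp only [Finset.mem_range] at hk
      have hk' : k ≤ m := by omega
      have hms : m + 1 - k = (m - k) + 1 := by omega
      rw [hms, ff_succ]
      have hcast : ((m - k + 1 : ℕ) : ℝ) = ((m - k : ℕ) : ℝ) + 1 := by push_cast; ring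
      rw [hcast]
      have hexp : b - (((m-k:ℕ):ℝ) + 1) = b - ((m-k:ℕ):ℝ) - 1 := by ring
      rw [hexp]
      ring
    · -- A k sum equals the shifted Gb sum
      apply Finset.sum_congr rfl
      intro k hk
      rw [ff_succ]
      have hcast : ((k + 1 : ℕ) : ℝ) = (k:ℝ) + 1 := by push_cast; ring
      rw [hcast]
      have hexp : a - ((k:ℝ)+1) = a - (k:ℝ) - 1 := by ring
      rw [hexp]
      ring
  rw [← hsum]
  exact key


def Vf (a b : ℝ) : ℝ → ℝ := fun s => (1-s) ^ a * (1+s) ^ b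

lemma iteratedDeriv_Vf (a b : ℝ) (m : ℕ) {t : ℝ} (ht : t ∈ Set.Ioo (-1:ℝ) 1) :
    iteratedDeriv m (Vf a b) t = Phi a b m t := by
  induction m generalizing t with
  | zero => simp [Vf, Phi, ff]
  | succ m ih =>
    rw [iteratedDeriv_succ]
    have hEv : iteratedDeriv m (Vf a b) =ᶠ[nhds t] Phi a b m :=
      Filter.eventuallyEq_of_mem (isOpen_Ioo.mem_nhds ht) (fun s hs => ih hs)
    rw [hEv.deriv_eq]
    obtain ⟨ht1, ht2⟩ := ht
    exact (phi_hasDerivAt a b m (by linarith) (by linarith)).deriv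

lemma deriv_congr_Ioo {F G : ℝ → ℝ} {t : ℝ} (ht : t ∈ Set.Ioo (-1:ℝ) 1)
    (h : ∀ s ∈ Set.Ioo (-1:ℝ) 1, F s = G s) : deriv F t = deriv G t :=
  (Filter.eventuallyEq_of_mem (isOpen_Ioo.mem_nhds ht) h).deriv_eq

lemma phi_E0 (a b : ℝ) {t : ℝ} (ht : t ∈ Set.Ioo (-1:ℝ) 1) :
    (1 - t^2) * Phi a b 1 t = ((b - a) - (a+b)*t) * Phi a b 0 t := by
  obtain ⟨ht1, ht2⟩ := ht
  have h1 : (0:ℝ) < 1 - t := by linarith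
  have h2 : (0:ℝ) < 1 + t := by linarith
  have e1 : (1-t)^(a-1) = (1-t)^a * (1-t)⁻¹ := by
    rw [show a-1 = a + (-1) by ring, Real.rpow_add h1, Real.rpow_neg_one]
  have e2 : (1+t)^(b-1) = (1+t)^b * (1+t)⁻¹ := by
    rw [show b-1 = b + (-1) by ring, Real.rpow_add h2, Real.rpow_neg_one]
  unfold Phi ff
  simp only [Finset.sum_range_succ, Finset.sum_range_zero, Finset.prod_range_succ,
    Finset.prod_range_zero, Nat.cast_zero, Nat.cast_one, Nat.choose_self, Nat.choose_zero_right,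
    Nat.sub_self, Nat.sub_zero, pow_zero, pow_one, zero_add, one_mul, mul_one, sub_zero]
  rw [e1, e2]
  field_simp
  ring

lemma phi_E (a b : ℝ) (m : ℕ) {t : ℝ} (ht : t ∈ Set.Ioo (-1:ℝ) 1) :
    (1 - t^2) * Phi a b (m+2) t
      = ((b - a) - (a+b)*t + 2*((m:ℝ)+1)*t) * Phi a b (m+1) t
        + (((m:ℝ)+1) * ((m:ℝ) - (a+b))) * Phi a b m t := by
  induction m generalizing t with
  | zero =>
    obtain ⟨ht1, ht2⟩ := ht
    have h1 : (0:ℝ) < 1 - t := by linarith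
    have h2 : (0:ℝ) < 1 + t := by linarith
    have hF : HasDerivAt (fun s => (1 - s^2) * Phi a b 1 s)
        (-(2*t) * Phi a b 1 t + (1 - t^2) * Phi a b 2 t) t := by
      have hq : HasDerivAt (fun s : ℝ => 1 - s^2) (-(2*t)) t := by
        simpa using ((hasDerivAt_pow 2 t).const_sub 1)
      simpa using hq.fun_mul (phi_hasDerivAt a b 1 h1 h2)
    have hG : HasDerivAt (fun s => ((b - a) - (a+b)*s) * Phi a b 0 s)
        (-(a+b) * Phi a b 0 t + ((b - a) - (a+b)*t) * Phi a b 1 t) t := by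
      have hl : HasDerivAt (fun s : ℝ => (b - a) - (a+b)*s) (-(a+b)) t := by
        simpa using ((hasDerivAt_id t).const_mul (a+b)).const_sub (b-a)
      simpa using hl.fun_mul (phi_hasDerivAt a b 0 h1 h2)
    have hEq := deriv_congr_Ioo (F := fun s => (1 - s^2) * Phi a b 1 s)
        (G := fun s => ((b - a) - (a+b)*s) * Phi a b 0 s) ⟨ht1, ht2⟩
        (fun s hs => phi_E0 a b hs)
    rw [hF.deriv, hG.deriv] at hEq
    push_cast
    linear_combination hEq
  | succ m ih =>
    obtain ⟨ht1, ht2⟩ := ht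
    have h1 : (0:ℝ) < 1 - t := by linarith
    have h2 : (0:ℝ) < 1 + t := by linarith
    have hF : HasDerivAt (fun s => (1 - s^2) * Phi a b (m+2) s)
        (-(2*t) * Phi a b (m+2) t + (1 - t^2) * Phi a b (m+3) t) t := by
      have hq : HasDerivAt (fun s : ℝ => 1 - s^2) (-(2*t)) t := by
        simpa using ((hasDerivAt_pow 2 t).const_sub 1)
      simpa using hq.fun_mul (phi_hasDerivAt a b (m+2) h1 h2)
    have hG : HasDerivAt (fun s => ((b - a) - (a+b)*s + 2*((m:ℝ)+1)*s) * Phi a b (m+1) s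
          + (((m:ℝ)+1) * ((m:ℝ) - (a+b))) * Phi a b m s)
        ((-(a+b) + 2*((m:ℝ)+1)) * Phi a b (m+1) t
          + ((b - a) - (a+b)*t + 2*((m:ℝ)+1)*t) * Phi a b (m+2) t
          + (((m:ℝ)+1) * ((m:ℝ) - (a+b))) * Phi a b (m+1) t) t := by
      have hl : HasDerivAt (fun s : ℝ => (b - a) - (a+b)*s + 2*((m:ℝ)+1)*s)
          (-(a+b) + 2*((m:ℝ)+1)) t := by
        have := (((hasDerivAt_id t).const_mul (a+b)).const_sub (b-a)).fun_add
          ((hasDerivAt_id t).const_mul (2*((m:ℝ)+1)))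
        refine this.congr_deriv ?_
        ring
      have := (hl.fun_mul (phi_hasDerivAt a b (m+1) h1 h2)).fun_add
        ((phi_hasDerivAt a b m h1 h2).const_mul (((m:ℝ)+1) * ((m:ℝ) - (a+b))))
      convert this using 1
    have hEq := deriv_congr_Ioo (F := fun s => (1 - s^2) * Phi a b (m+2) s)
        (G := fun s => ((b - a) - (a+b)*s + 2*((m:ℝ)+1)*s) * Phi a b (m+1) s
          + (((m:ℝ)+1) * ((m:ℝ) - (a+b))) * Phi a b m s) ⟨ht1, ht2⟩
        (fun s hs => ih hs)
    rw [hF.deriv, hG.deriv] at hEq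
    push_cast
    linear_combination hEq


/-- the polynomial equal to `2^n n! (-1)^n P_n` -/
def qp (α β : ℝ) (n : ℕ) : Polynomial ℝ :=
  ∑ k ∈ Finset.range (n+1),
    Polynomial.C ((n.choose k : ℝ) * ((-1)^k * ff (α+n) k) * ff (β+n) (n-k)) *
      (1 - Polynomial.X)^(n-k) * (1 + Polynomial.X)^k

lemma phi_eq_W_mul_q (α β : ℝ) (n : ℕ) {t : ℝ} (ht : t ∈ Set.Ioo (-1:ℝ) 1) :
    Phi (α+n) (β+n) n t = ((1-t)^α * (1+t)^β) * (qp α β n).eval t := by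
  obtain ⟨ht1, ht2⟩ := ht
  have h1 : (0:ℝ) < 1 - t := by linarith
  have h2 : (0:ℝ) < 1 + t := by linarith
  unfold Phi qp
  rw [Polynomial.eval_finset_sum, Finset.mul_sum]
  apply Finset.sum_congr rfl
  intro k hk
  simp only [Finset.mem_range] at hk
  have hk' : k ≤ n := by omega
  have e1 : (1-t) ^ (α + (n:ℝ) - (k:ℝ)) = (1-t)^α * (1-t)^((n-k : ℕ) : ℝ) := by
    rw [← Real.rpow_add h1]
    congr 1
    rw [Nat.cast_sub hk']
    ring
  have e2 : (1+t) ^ (β + (n:ℝ) - ((n-k : ℕ):ℝ)) = (1+t)^β * (1+t)^((k:ℕ) : ℝ) := by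
    rw [← Real.rpow_add h2]
    congr 1
    rw [Nat.cast_sub hk']
    ring
  rw [e1, e2, Real.rpow_natCast, Real.rpow_natCast]
  simp only [Polynomial.eval_mul, Polynomial.eval_pow, Polynomial.eval_add, Polynomial.eval_sub,
    Polynomial.eval_one, Polynomial.eval_X, Polynomial.eval_C]
  ring

lemma jacobiP_eq (α β : ℝ) (n : ℕ) {t : ℝ} (ht : t ∈ Set.Ioo (-1:ℝ) 1) :
    jacobiP α β n t = ((-1 : ℝ) ^ n / ((2 : ℝ) ^ n * (n.factorial : ℝ))) * (qp α β n).eval t := by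
  obtain ⟨ht1, ht2⟩ := ht
  have h1 : (0:ℝ) < 1 - t := by linarith
  have h2 : (0:ℝ) < 1 + t := by linarith
  unfold jacobiP
  have hV : (fun s : ℝ => (1 - s) ^ (α + (n:ℝ)) * (1 + s) ^ (β + (n:ℝ))) = Vf (α+n) (β+n) := rfl
  rw [hV, iteratedDeriv_Vf _ _ _ ⟨ht1, ht2⟩, phi_eq_W_mul_q α β n ⟨ht1, ht2⟩]
  have e1 : (1-t) ^ (-α) * (1-t)^α = 1 := by
    rw [← Real.rpow_add h1]; simp
  have e2 : (1+t) ^ (-β) * (1+t)^β = 1 := by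
    rw [← Real.rpow_add h2]; simp
  calc ((-1 : ℝ) ^ n / ((2 : ℝ) ^ n * (n.factorial : ℝ))) * (1-t)^(-α) * (1+t)^(-β) *
      (((1-t)^α * (1+t)^β) * (qp α β n).eval t)
      = ((-1 : ℝ) ^ n / ((2 : ℝ) ^ n * (n.factorial : ℝ))) * ((1-t)^(-α) * (1-t)^α) *
        ((1+t)^(-β) * (1+t)^β) * (qp α β n).eval t := by ring
    _ = _ := by rw [e1, e2]; ring


def Wf (α β : ℝ) (t : ℝ) : ℝ := (1-t)^α * (1+t)^β
def Wd (α β : ℝ) (t : ℝ) : ℝ :=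
  -α * (1-t)^(α-1) * (1+t)^β + β * (1-t)^α * (1+t)^(β-1)
def Wdd (α β : ℝ) (t : ℝ) : ℝ :=
  α*(α-1) * (1-t)^(α-2) * (1+t)^β - 2*α*β * (1-t)^(α-1) * (1+t)^(β-1)
    + β*(β-1) * (1-t)^α * (1+t)^(β-2)

lemma hasDerivAt_Wf (α β : ℝ) {t : ℝ} (h1 : (0:ℝ) < 1-t) (h2 : (0:ℝ) < 1+t) :
    HasDerivAt (Wf α β) (Wd α β t) t := by
  have h := (hasDerivAt_one_sub_rpow h1 α).mul (hasDerivAt_one_add_rpow h2 β)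
  have he : Wd α β t = (-(α * (1-t)^(α-1))) * (1+t)^β + (1-t)^α * (β * (1+t)^(β-1)) := by
    unfold Wd; ring
  rw [he]
  exact h

lemma hasDerivAt_Wd (α β : ℝ) {t : ℝ} (h1 : (0:ℝ) < 1-t) (h2 : (0:ℝ) < 1+t) :
    HasDerivAt (Wd α β) (Wdd α β t) t := by
  have hA := (((hasDerivAt_one_sub_rpow h1 (α-1)).const_mul (-α)).fun_mul
    (hasDerivAt_one_add_rpow h2 β))
  have hB := (((hasDerivAt_one_sub_rpow h1 α).const_mul β).fun_mul
    (hasDerivAt_one_add_rpow h2 (β-1)))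
  have h := hA.fun_add hB
  refine h.congr_deriv ?_
  simp only [show α-1-1 = α-2 from by ring, show β-1-1 = β-2 from by ring]
  unfold Wdd
  ring

lemma phi_succ_eq (α β : ℝ) (n : ℕ) {t : ℝ} (ht : t ∈ Set.Ioo (-1:ℝ) 1) :
    Phi (α+n) (β+n) (n+1) t
      = Wd α β t * (qp α β n).eval t
        + Wf α β t * (Polynomial.derivative (qp α β n)).eval t := by
  obtain ⟨ht1, ht2⟩ := ht
  have h1 : (0:ℝ) < 1 - t := by linarith
  have h2 : (0:ℝ) < 1 + t := by linarith
  have h := (phi_hasDerivAt (α+n) (β+n) n h1 h2).deriv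
  rw [← h, deriv_congr_Ioo ⟨ht1, ht2⟩
    (F := Phi (α+n) (β+n) n) (G := fun s => Wf α β s * (qp α β n).eval s)
    (fun s hs => phi_eq_W_mul_q α β n hs)]
  exact ((hasDerivAt_Wf α β h1 h2).mul (Polynomial.hasDerivAt _ t)).deriv

lemma phi_succ2_eq (α β : ℝ) (n : ℕ) {t : ℝ} (ht : t ∈ Set.Ioo (-1:ℝ) 1) :
    Phi (α+n) (β+n) (n+2) t
      = Wdd α β t * (qp α β n).eval t
        + 2 * Wd α β t * (Polynomial.derivative (qp α β n)).eval t
        + Wf α β t * (Polynomial.derivative (Polynomial.derivative (qp α β n))).eval t := by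
  obtain ⟨ht1, ht2⟩ := ht
  have h1 : (0:ℝ) < 1 - t := by linarith
  have h2 : (0:ℝ) < 1 + t := by linarith
  have h := (phi_hasDerivAt (α+n) (β+n) (n+1) h1 h2).deriv
  rw [show n+2 = n+1+1 from rfl, ← h, deriv_congr_Ioo ⟨ht1, ht2⟩
    (F := Phi (α+n) (β+n) (n+1))
    (G := fun s => Wd α β s * (qp α β n).eval s
        + Wf α β s * (Polynomial.derivative (qp α β n)).eval s)
    (fun s hs => phi_succ_eq α β n hs)]
  have hd := ((hasDerivAt_Wd α β h1 h2).fun_mul (Polynomial.hasDerivAt (qp α β n) t)).fun_add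
    ((hasDerivAt_Wf α β h1 h2).fun_mul (Polynomial.hasDerivAt (Polynomial.derivative (qp α β n)) t))
  rw [hd.deriv]
  ring

lemma ode (α β : ℝ) (n : ℕ) {t : ℝ} (ht : t ∈ Set.Ioo (-1:ℝ) 1) :
    (1-t^2) * (Polynomial.derivative (Polynomial.derivative (qp α β n))).eval t
      + ((β-α) - (α+β+2)*t) * (Polynomial.derivative (qp α β n)).eval t
      + ((n:ℝ)*((n:ℝ)+α+β+1)) * (qp α β n).eval t = 0 := by
  obtain ⟨ht1, ht2⟩ := ht
  have h1 : (0:ℝ) < 1 - t := by linarith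
  have h2 : (0:ℝ) < 1 + t := by linarith
  have hE := phi_E (α+n) (β+n) n ⟨ht1, ht2⟩
  rw [phi_succ2_eq α β n ⟨ht1, ht2⟩, phi_succ_eq α β n ⟨ht1, ht2⟩,
    phi_eq_W_mul_q α β n ⟨ht1, ht2⟩] at hE
  unfold Wdd Wd Wf at hE
  have eA1 : (1-t)^(α-1) = (1-t)^(α-2) * (1-t) := by
    rw [show α-1 = (α-2)+1 from by ring, Real.rpow_add h1, Real.rpow_one]
  have eB1 : (1+t)^(β-1) = (1+t)^(β-2) * (1+t) := by
    rw [show β-1 = (β-2)+1 from by ring, Real.rpow_add h2, Real.rpow_one]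
  have eA0 : (1-t)^α = (1-t)^(α-2) * ((1-t) * (1-t)) := by
    rw [show α = (α-2)+(1+1) from by ring, Real.rpow_add h1, Real.rpow_add h1, Real.rpow_one]
    ring
  have eB0 : (1+t)^β = (1+t)^(β-2) * ((1+t) * (1+t)) := by
    rw [show β = (β-2)+(1+1) from by ring, Real.rpow_add h2, Real.rpow_add h2, Real.rpow_one]
    ring
  rw [eA1, eB1, eA0, eB0] at hE
  have hA : (0:ℝ) < (1-t)^(α-2) := Real.rpow_pos_of_pos h1 _
  have hB : (0:ℝ) < (1+t)^(β-2) := Real.rpow_pos_of_pos h2 _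
  have hD : ((1-t)^(α-2) * (1+t)^(β-2)) * (((1-t)*(1-t))*((1+t)*(1+t))) ≠ 0 := by positivity
  have key : ((1-t)^(α-2) * (1+t)^(β-2)) * (((1-t)*(1-t))*((1+t)*(1+t))) *
      ((1-t^2) * (Polynomial.derivative (Polynomial.derivative (qp α β n))).eval t
      + ((β-α) - (α+β+2)*t) * (Polynomial.derivative (qp α β n)).eval t
      + ((n:ℝ)*((n:ℝ)+α+β+1)) * (qp α β n).eval t)
      = ((1-t)^(α-2) * (1+t)^(β-2)) * (((1-t)*(1-t))*((1+t)*(1+t))) * 0 := by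
    rw [mul_zero]
    linear_combination hE
  exact mul_left_cancel₀ hD key


lemma sonin (α β : ℝ) (hα : -1 < α) (hβ : -1 < β) (hmax : -(1/2 : ℝ) ≤ max α β)
    (n : ℕ) (hn : 1 ≤ n) {t : ℝ} (ht : t ∈ Set.Icc (-1:ℝ) 1) :
    |(qp α β n).eval t| ≤ max |(qp α β n).eval 1| |(qp α β n).eval (-1)| := by
  obtain ⟨ht1, ht2⟩ := ht
  obtain ⟨q, hq⟩ : ∃ q : Polynomial ℝ, q = qp α β n := ⟨_, rfl⟩
  obtain ⟨lam, hlamdef⟩ : ∃ lam : ℝ, lam = (n:ℝ) * ((n:ℝ) + α + β + 1) := ⟨_, rfl⟩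
  have habsum : -(3/2:ℝ) < α + β := by
    rcases le_max_iff.mp hmax with h | h
    · linarith
    · linarith
  have hn1 : (1:ℝ) ≤ (n:ℝ) := by exact_mod_cast hn
  have hlam : 0 < lam := by
    rw [hlamdef]
    apply mul_pos (by linarith)
    linarith
  obtain ⟨f, hfdef⟩ : ∃ f : ℝ → ℝ,
      f = fun s => (q.eval s)^2 + (1-s^2)*((Polynomial.derivative q).eval s)^2/lam := ⟨_, rfl⟩
  have hf : ∀ s ∈ Set.Ioo (-1:ℝ) 1, HasDerivAt f
      (2*((Polynomial.derivative q).eval s)^2/lam * ((α+β+1)*s + (α-β))) s := by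
    intro s hs
    have hode := ode α β n hs
    have hqs := Polynomial.hasDerivAt q s
    have hqs' := Polynomial.hasDerivAt (Polynomial.derivative q) s
    have h1 : HasDerivAt (fun s => (q.eval s)^2)
        (2 * q.eval s * (Polynomial.derivative q).eval s) s := by
      simpa using hqs.fun_pow 2
    have h2 : HasDerivAt (fun s => (1-s^2)*((Polynomial.derivative q).eval s)^2/lam)
        ((-(2*s) * ((Polynomial.derivative q).eval s)^2
          + (1-s^2) * (2 * (Polynomial.derivative q).eval s *
              (Polynomial.derivative (Polynomial.derivative q)).eval s))/lam) s := by
      apply HasDerivAt.div_const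
      have ha : HasDerivAt (fun s : ℝ => 1-s^2) (-(2*s)) s := by
        simpa using (hasDerivAt_pow 2 s).const_sub 1
      have hb : HasDerivAt (fun s => ((Polynomial.derivative q).eval s)^2)
          (2 * (Polynomial.derivative q).eval s *
            (Polynomial.derivative (Polynomial.derivative q)).eval s) s := by
        simpa using hqs'.fun_pow 2
      have := ha.fun_mul hb
      convert this using 1
    have h := h1.fun_add h2
    rw [← hq, ← hlamdef] at hode
    rw [hfdef]
    refine h.congr_deriv ?_
    have hlam' : lam ≠ 0 := ne_of_gt hlam
    field_simp
    linear_combination (Polynomial.eval s (Polynomial.derivative q)) * hode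
  have hfc : Continuous f := by
    rw [hfdef]
    apply Continuous.add
    · exact q.continuous.pow 2
    · exact ((continuous_const.sub (continuous_pow 2)).mul
        ((Polynomial.derivative q).continuous.pow 2)).div_const lam
  -- dichotomy and monotonicity
  have hkey : f t ≤ max (f 1) (f (-1)) := by
    by_cases hg : ∀ s ∈ Set.Icc t 1, 0 ≤ (α+β+1)*s + (α-β)
    · have hmono : MonotoneOn f (Set.Icc t 1) := by
        apply monotoneOn_of_deriv_nonneg (convex_Icc t 1) (hfc.continuousOn)
        · intro s hs
          rw [interior_Icc] at hs
          exact ((hf s ⟨by linarith [hs.1], hs.2⟩).differentiableAt).differentiableWithinAt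
        · intro s hs
          rw [interior_Icc] at hs
          have hs' : s ∈ Set.Ioo (-1:ℝ) 1 := ⟨by linarith [hs.1], hs.2⟩
          rw [(hf s hs').deriv]
          have hgs := hg s ⟨le_of_lt hs.1, le_of_lt hs.2⟩
          have : (0:ℝ) ≤ 2*((Polynomial.derivative q).eval s)^2/lam := by positivity
          exact mul_nonneg this hgs
      exact le_max_of_le_left (hmono ⟨le_refl t, ht2⟩ ⟨ht2, le_refl 1⟩ ht2)
    · push_neg at hg
      obtain ⟨s₀, hs₀, hgs₀⟩ := hg
      have hgle : ∀ s ∈ Set.Icc (-1:ℝ) t, (α+β+1)*s + (α-β) ≤ 0 := by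
        intro s hs
        rcases le_or_gt 0 (α+β+1) with hsl | hsl
        · nlinarith [hs.2, hs₀.1, hs₀.2]
        · rcases le_max_iff.mp hmax with hmα | hmβ
          · nlinarith [hs₀.2]
          · nlinarith [hs.1]
      have hanti : AntitoneOn f (Set.Icc (-1:ℝ) t) := by
        apply antitoneOn_of_deriv_nonpos (convex_Icc (-1:ℝ) t) (hfc.continuousOn)
        · intro s hs
          rw [interior_Icc] at hs
          exact ((hf s ⟨hs.1, by linarith [hs.2]⟩).differentiableAt).differentiableWithinAt
        · intro s hs
          rw [interior_Icc] at hs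
          have hs' : s ∈ Set.Ioo (-1:ℝ) 1 := ⟨hs.1, by linarith [hs.2]⟩
          rw [(hf s hs').deriv]
          have hgs := hgle s ⟨le_of_lt hs.1, le_of_lt hs.2⟩
          have h2' : (0:ℝ) ≤ 2*((Polynomial.derivative q).eval s)^2/lam := by positivity
          exact mul_nonpos_of_nonneg_of_nonpos h2' hgs
      exact le_max_of_le_right (hanti ⟨le_refl (-1:ℝ), ht1⟩ ⟨ht1, le_refl t⟩ ht1)
  have hf1 : f 1 = (q.eval 1)^2 := by norm_num [hfdef]
  have hfm1 : f (-1) = (q.eval (-1))^2 := by norm_num [hfdef]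
  have hlow : (q.eval t)^2 ≤ f t := by
    have h1t : (0:ℝ) ≤ 1 - t^2 := by nlinarith
    have : (0:ℝ) ≤ (1-t^2)*((Polynomial.derivative q).eval t)^2/lam := by positivity
    rw [hfdef]
    dsimp only
    linarith
  have hsq : (q.eval t)^2 ≤ (max |q.eval 1| |q.eval (-1)|)^2 := by
    rw [hf1, hfm1] at hkey
    have hM : max ((q.eval 1)^2) ((q.eval (-1))^2) ≤ (max |q.eval 1| |q.eval (-1)|)^2 := by
      apply max_le
      · rw [← sq_abs]
        exact pow_le_pow_left₀ (abs_nonneg _) (le_max_left _ _) 2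
      · rw [← sq_abs]
        exact pow_le_pow_left₀ (abs_nonneg _) (le_max_right _ _) 2
    exact hlow.trans (hkey.trans hM)
  rw [← hq]
  calc |q.eval t| = Real.sqrt ((q.eval t)^2) := (Real.sqrt_sq_eq_abs _).symm
    _ ≤ Real.sqrt ((max |q.eval 1| |q.eval (-1)|)^2) := Real.sqrt_le_sqrt hsq
    _ = max |q.eval 1| |q.eval (-1)| := Real.sqrt_sq (le_max_iff.mpr (Or.inl (abs_nonneg _)))


lemma qp_eval_one (α β : ℝ) (n : ℕ) :
    (qp α β n).eval 1 = (-1)^n * ff (α+n) n * 2^n := by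
  unfold qp
  rw [Polynomial.eval_finset_sum, Finset.sum_eq_single n]
  · simp [ff, Polynomial.eval_prod]
    left
    norm_num
  · intro k hk hkn
    simp only [Finset.mem_range] at hk
    have hnk : n - k ≠ 0 := by omega
    simp [zero_pow hnk]
  · intro h
    exact absurd (Finset.self_mem_range_succ n) h

lemma qp_eval_negone (α β : ℝ) (n : ℕ) :
    (qp α β n).eval (-1) = ff (β+n) n * 2^n := by
  unfold qp
  rw [Polynomial.eval_finset_sum, Finset.sum_eq_single 0]
  · norm_num [ff, Polynomial.eval_prod]
  · intro k hk hkn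
    simp [zero_pow hkn]
  · intro h
    exact absurd (Finset.mem_range.mpr (by omega)) h

lemma prod_ratio (n : ℕ) : ∏ i ∈ Finset.range n, (((i:ℝ)+2)/((i:ℝ)+1)) = (n:ℝ)+1 := by
  induction n with
  | zero => simp
  | succ n ih =>
    rw [Finset.prod_range_succ, ih]
    have h : ((n:ℝ)+1) ≠ 0 := by positivity
    push_cast
    field_simp
    ring

lemma prod_add_one (n : ℕ) : ∏ i ∈ Finset.range n, ((i:ℝ)+1) = (n.factorial : ℝ) := by
  induction n with
  | zero => simp
  | succ n ih =>
    rw [Finset.prod_range_succ, ih, Nat.factorial_succ]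
    push_cast
    ring

lemma ff_abs_le (c : ℝ) (n K : ℕ) (hK : |c| ≤ K) :
    |ff (c + n) n| ≤ (n.factorial : ℝ) * ((n:ℝ)+1)^K := by
  have hre : ff (c + n) n = ∏ j ∈ Finset.range n, (c + ((j:ℝ)+1)) := by
    rw [ff, ← Finset.prod_range_reflect]
    apply Finset.prod_congr rfl
    intro j hj
    simp only [Finset.mem_range] at hj
    have h1 : n - 1 - j = n - (j+1) := by omega
    rw [h1, Nat.cast_sub (by omega)]
    push_cast
    ring
  rw [hre]
  calc |∏ j ∈ Finset.range n, (c + ((j:ℝ)+1))|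
      = ∏ j ∈ Finset.range n, |c + ((j:ℝ)+1)| := Finset.abs_prod _ _
    _ ≤ ∏ j ∈ Finset.range n, (((j:ℝ)+1) * ((((j:ℝ)+2))/(((j:ℝ)+1)))^K) := by
        apply Finset.prod_le_prod (fun j _ => abs_nonneg _)
        intro j _
        have hj1 : (0:ℝ) < (j:ℝ)+1 := by positivity
        have hb : ((j:ℝ)+1) + (K:ℝ) ≤ (((j:ℝ)+1) * ((((j:ℝ)+2))/(((j:ℝ)+1)))^K) := by
          have hber : 1 + (K:ℝ) * (1/((j:ℝ)+1)) ≤ (1 + 1/((j:ℝ)+1))^K := by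
            apply one_add_mul_le_pow
            have : (0:ℝ) ≤ 1/((j:ℝ)+1) := by positivity
            linarith
          have he : (1 + 1/((j:ℝ)+1)) = (((j:ℝ)+2))/(((j:ℝ)+1)) := by
            field_simp
            ring
          rw [he] at hber
          calc ((j:ℝ)+1) + (K:ℝ) = (((j:ℝ)+1)) * (1 + (K:ℝ) * (1/((j:ℝ)+1))) := by
                field_simp
            _ ≤ (((j:ℝ)+1)) * ((((j:ℝ)+2))/(((j:ℝ)+1)))^K := by
                apply mul_le_mul_of_nonneg_left hber (le_of_lt hj1)
        calc |c + ((j:ℝ)+1)| ≤ |c| + (((j:ℝ)+1)) := by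
              have := abs_add_le c (((j:ℝ)+1))
              have h2 : |(((j:ℝ)+1))| = ((j:ℝ)+1) := abs_of_pos hj1
              rw [h2] at this
              exact this
          _ ≤ ((j:ℝ)+1) + (K:ℝ) := by linarith
          _ ≤ _ := hb
    _ = (∏ j ∈ Finset.range n, ((j:ℝ)+1)) * (∏ j ∈ Finset.range n, ((((j:ℝ)+2))/(((j:ℝ)+1))))^K := by
        rw [Finset.prod_mul_distrib, ← Finset.prod_pow]
    _ = (n.factorial : ℝ) * ((n:ℝ)+1)^K := by rw [prod_add_one, prod_ratio]

lemma jacobiP_bound_Ioo (α β : ℝ) (hα : -1 < α) (hβ : -1 < β) (hmax : -(1/2 : ℝ) ≤ max α β)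
    (n : ℕ) (hn : 1 ≤ n) (K : ℕ) (hKα : |α| ≤ K) (hKβ : |β| ≤ K)
    {t : ℝ} (ht : t ∈ Set.Ioo (-1:ℝ) 1) :
    |jacobiP α β n t| ≤ ((n:ℝ)+1)^K := by
  rw [jacobiP_eq α β n ht]
  have hson := sonin α β hα hβ hmax n hn (Set.mem_Icc.mpr ⟨le_of_lt ht.1, le_of_lt ht.2⟩)
  have hfac : (0:ℝ) < (2:ℝ)^n * (n.factorial : ℝ) := by positivity
  have h1 : |(qp α β n).eval 1| ≤ (2:ℝ)^n * (n.factorial : ℝ) * ((n:ℝ)+1)^K := by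
    rw [qp_eval_one]
    rw [abs_mul, abs_mul, abs_pow, abs_neg, abs_one, one_pow, one_mul, abs_pow]
    have := ff_abs_le α n K hKα
    calc |ff (α+n) n| * |(2:ℝ)|^n ≤ ((n.factorial : ℝ) * ((n:ℝ)+1)^K) * |(2:ℝ)|^n := by
          apply mul_le_mul_of_nonneg_right this (by positivity)
      _ = (2:ℝ)^n * (n.factorial : ℝ) * ((n:ℝ)+1)^K := by
          rw [abs_of_pos (by norm_num : (0:ℝ) < 2)]
          ring
  have h2 : |(qp α β n).eval (-1)| ≤ (2:ℝ)^n * (n.factorial : ℝ) * ((n:ℝ)+1)^K := by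
    rw [qp_eval_negone]
    rw [abs_mul, abs_pow]
    have := ff_abs_le β n K hKβ
    calc |ff (β+n) n| * |(2:ℝ)|^n ≤ ((n.factorial : ℝ) * ((n:ℝ)+1)^K) * |(2:ℝ)|^n := by
          apply mul_le_mul_of_nonneg_right this (by positivity)
      _ = (2:ℝ)^n * (n.factorial : ℝ) * ((n:ℝ)+1)^K := by
          rw [abs_of_pos (by norm_num : (0:ℝ) < 2)]
          ring
  have hmaxle : max |(qp α β n).eval 1| |(qp α β n).eval (-1)|
      ≤ (2:ℝ)^n * (n.factorial : ℝ) * ((n:ℝ)+1)^K := max_le h1 h2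
  rw [abs_mul]
  have hcoef : |(-1 : ℝ) ^ n / ((2 : ℝ) ^ n * (n.factorial : ℝ))|
      = ((2 : ℝ) ^ n * (n.factorial : ℝ))⁻¹ := by
    rw [abs_div, abs_pow, abs_neg, abs_one, one_pow, abs_of_pos hfac]
    exact one_div _
  rw [hcoef]
  calc ((2 : ℝ) ^ n * (n.factorial : ℝ))⁻¹ * |(qp α β n).eval t|
      ≤ ((2 : ℝ) ^ n * (n.factorial : ℝ))⁻¹ * ((2:ℝ)^n * (n.factorial : ℝ) * ((n:ℝ)+1)^K) := by
        apply mul_le_mul_of_nonneg_left (hson.trans hmaxle) (by positivity)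
    _ = ((n:ℝ)+1)^K := by field_simp


lemma iteratedDeriv_continuousAt_of_contDiffOn {U : Set ℝ} (hU : IsOpen U) {g : ℝ → ℝ}
    (hg : ContDiffOn ℝ (⊤ : ℕ∞) g U) {x : ℝ} (hx : x ∈ U) (n : ℕ) :
    ContinuousAt (iteratedDeriv n g) x := by
  have h1 : ContinuousOn (iteratedDerivWithin n g U) U :=
    hg.continuousOn_iteratedDerivWithin (mod_cast le_top) hU.uniqueDiffOn
  have h2 : Set.EqOn (iteratedDerivWithin n g U) (iteratedDeriv n g) U := by
    intro y hy
    simp only [iteratedDerivWithin, iteratedDeriv]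
    rw [iteratedFDerivWithin_of_isOpen n hU hy]
  exact (h1.continuousAt (hU.mem_nhds hx)).congr
    (Filter.eventuallyEq_of_mem (hU.mem_nhds hx) h2)

lemma jacobiP_one_bound (α β : ℝ) (hα : -1 < α) (hβ : -1 < β) (hmax : -(1/2 : ℝ) ≤ max α β)
    (n : ℕ) (hn : 1 ≤ n) (K : ℕ) (hKα : |α| ≤ K) (hKβ : |β| ≤ K) :
    |jacobiP α β n 1| ≤ ((n:ℝ)+1)^K := by
  by_cases hα0 : α = 0
  · -- continuity argument
    subst hα0
    have hV : (fun s : ℝ => (1 - s) ^ ((0:ℝ) + (n:ℝ)) * (1 + s) ^ (β + (n:ℝ)))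
        = fun s : ℝ => (1 - s) ^ (n:ℕ) * (1 + s) ^ (β + (n:ℝ)) := by
      funext s
      rw [zero_add, Real.rpow_natCast]
    have hcV : ContDiffOn ℝ (⊤ : ℕ∞) (fun s : ℝ => (1 - s) ^ (n:ℕ) * (1 + s) ^ (β + (n:ℝ)))
        (Set.Ioi (-1:ℝ)) := by
      apply ContDiffOn.mul
      · exact ((contDiff_const.sub contDiff_id).pow n).contDiffOn
      · intro x hx
        have hx0 : (1:ℝ) + x ≠ 0 := by
          simp only [Set.mem_Ioi] at hx
          intro h; nlinarith
        exact ((Real.contDiffAt_rpow_const_of_ne hx0).comp x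
          ((contDiff_const.add contDiff_id).contDiffAt)).contDiffWithinAt
    have hcont : ContinuousAt (jacobiP 0 β n) 1 := by
      unfold jacobiP
      rw [hV]
      apply ContinuousAt.mul
      apply ContinuousAt.mul
      apply ContinuousAt.mul continuousAt_const
      · -- (1 - t) ^ (-0) = 1
        have : (fun t : ℝ => (1 - t) ^ (-(0:ℝ))) = fun _ : ℝ => (1:ℝ) := by
          funext t; rw [neg_zero, Real.rpow_zero]
        rw [this]
        exact continuousAt_const
      · have h0 : ((1:ℝ) + 1) ≠ 0 := by norm_num
        exact (Real.continuousAt_rpow_const (1+1) (-β) (Or.inl h0)).comp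
          (continuousAt_const.add continuousAt_id)
      · exact iteratedDeriv_continuousAt_of_contDiffOn isOpen_Ioi hcV (by norm_num) n
    have hval : jacobiP 0 β n 1
        = ((-1 : ℝ) ^ n / ((2 : ℝ) ^ n * (n.factorial : ℝ))) * (qp 0 β n).eval 1 := by
      have hne : Filter.NeBot (nhdsWithin (1:ℝ) (Set.Ioo (-1:ℝ) 1)) := by
        rw [← mem_closure_iff_nhdsWithin_neBot, closure_Ioo (by norm_num : (-1:ℝ) ≠ 1)]
        exact ⟨by norm_num, le_refl 1⟩
      have hT1 : Filter.Tendsto (jacobiP 0 β n) (nhdsWithin (1:ℝ) (Set.Ioo (-1:ℝ) 1))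
          (nhds (jacobiP 0 β n 1)) := (hcont.continuousWithinAt).tendsto
      have hT2 : Filter.Tendsto (jacobiP 0 β n) (nhdsWithin (1:ℝ) (Set.Ioo (-1:ℝ) 1))
          (nhds (((-1 : ℝ) ^ n / ((2 : ℝ) ^ n * (n.factorial : ℝ))) * (qp 0 β n).eval 1)) := by
        have hT2' : Filter.Tendsto
            (fun t => ((-1 : ℝ) ^ n / ((2 : ℝ) ^ n * (n.factorial : ℝ))) * (qp 0 β n).eval t)
            (nhdsWithin (1:ℝ) (Set.Ioo (-1:ℝ) 1))
            (nhds (((-1 : ℝ) ^ n / ((2 : ℝ) ^ n * (n.factorial : ℝ))) * (qp 0 β n).eval 1)) := by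
          apply Filter.Tendsto.mono_left _ nhdsWithin_le_nhds
          exact (continuous_const.mul (qp 0 β n).continuous).tendsto 1
        apply hT2'.congr'
        apply Filter.eventuallyEq_of_mem self_mem_nhdsWithin
        intro s hs
        exact (jacobiP_eq 0 β n hs).symm
      exact tendsto_nhds_unique hT1 hT2
    rw [hval, abs_mul]
    have hcoef : |(-1 : ℝ) ^ n / ((2 : ℝ) ^ n * (n.factorial : ℝ))|
        = ((2 : ℝ) ^ n * (n.factorial : ℝ))⁻¹ := by
      have hfac : (0:ℝ) < (2:ℝ)^n * (n.factorial : ℝ) := by positivity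
      rw [abs_div, abs_pow, abs_neg, abs_one, one_pow, abs_of_pos hfac]
      exact one_div _
    rw [hcoef, qp_eval_one]
    rw [abs_mul, abs_mul, abs_pow, abs_neg, abs_one, one_pow, one_mul, abs_pow]
    have hff := ff_abs_le 0 n K (by simpa using hKα)
    have hfac : (0:ℝ) < (2:ℝ)^n * (n.factorial : ℝ) := by positivity
    calc ((2 : ℝ) ^ n * (n.factorial : ℝ))⁻¹ * (|ff (0+(n:ℝ)) n| * |(2:ℝ)|^n)
        ≤ ((2 : ℝ) ^ n * (n.factorial : ℝ))⁻¹ * (((n.factorial : ℝ) * ((n:ℝ)+1)^K) * |(2:ℝ)|^n) := by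
          apply mul_le_mul_of_nonneg_left (mul_le_mul_of_nonneg_right hff (by positivity))
            (by positivity)
      _ = ((n:ℝ)+1)^K := by
          rw [abs_of_pos (by norm_num : (0:ℝ) < 2)]
          field_simp
  · -- prefactor vanishes
    have : jacobiP α β n 1 = 0 := by
      unfold jacobiP
      rw [show (1:ℝ) - 1 = 0 from by norm_num, Real.zero_rpow (neg_ne_zero.mpr hα0)]
      ring
    rw [this, abs_zero]
    positivity


lemma jacobiP_negone_bound (α β : ℝ) (hα : -1 < α) (hβ : -1 < β) (hmax : -(1/2 : ℝ) ≤ max α β)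
    (n : ℕ) (hn : 1 ≤ n) (K : ℕ) (hKα : |α| ≤ K) (hKβ : |β| ≤ K) :
    |jacobiP α β n (-1)| ≤ ((n:ℝ)+1)^K := by
  by_cases hβ0 : β = 0
  · subst hβ0
    have hV : (fun s : ℝ => (1 - s) ^ (α + (n:ℝ)) * (1 + s) ^ ((0:ℝ) + (n:ℝ)))
        = fun s : ℝ => (1 - s) ^ (α + (n:ℝ)) * (1 + s) ^ (n:ℕ) := by
      funext s
      rw [zero_add, Real.rpow_natCast]
    have hcV : ContDiffOn ℝ (⊤ : ℕ∞) (fun s : ℝ => (1 - s) ^ (α + (n:ℝ)) * (1 + s) ^ (n:ℕ))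
        (Set.Iio (1:ℝ)) := by
      apply ContDiffOn.mul
      · intro x hx
        have hx0 : (1:ℝ) - x ≠ 0 := by
          simp only [Set.mem_Iio] at hx
          intro h; nlinarith
        exact ((Real.contDiffAt_rpow_const_of_ne hx0).comp x
          ((contDiff_const.sub contDiff_id).contDiffAt)).contDiffWithinAt
      · exact ((contDiff_const.add contDiff_id).pow n).contDiffOn
    have hcont : ContinuousAt (jacobiP α 0 n) (-1) := by
      unfold jacobiP
      rw [hV]
      apply ContinuousAt.mul
      apply ContinuousAt.mul
      apply ContinuousAt.mul continuousAt_const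
      · have h0 : ((1:ℝ) - (-1)) ≠ 0 := by norm_num
        exact (Real.continuousAt_rpow_const (1-(-1)) (-α) (Or.inl h0)).comp
          (continuousAt_const.sub continuousAt_id)
      · have : (fun t : ℝ => (1 + t) ^ (-(0:ℝ))) = fun _ : ℝ => (1:ℝ) := by
          funext t; rw [neg_zero, Real.rpow_zero]
        rw [this]
        exact continuousAt_const
      · exact iteratedDeriv_continuousAt_of_contDiffOn isOpen_Iio hcV (by norm_num) n
    have hval : jacobiP α 0 n (-1)
        = ((-1 : ℝ) ^ n / ((2 : ℝ) ^ n * (n.factorial : ℝ))) * (qp α 0 n).eval (-1) := by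
      have hne : Filter.NeBot (nhdsWithin (-1:ℝ) (Set.Ioo (-1:ℝ) 1)) := by
        rw [← mem_closure_iff_nhdsWithin_neBot, closure_Ioo (by norm_num : (-1:ℝ) ≠ 1)]
        exact ⟨le_refl (-1:ℝ), by norm_num⟩
      have hT1 : Filter.Tendsto (jacobiP α 0 n) (nhdsWithin (-1:ℝ) (Set.Ioo (-1:ℝ) 1))
          (nhds (jacobiP α 0 n (-1))) := (hcont.continuousWithinAt).tendsto
      have hT2 : Filter.Tendsto (jacobiP α 0 n) (nhdsWithin (-1:ℝ) (Set.Ioo (-1:ℝ) 1))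
          (nhds (((-1 : ℝ) ^ n / ((2 : ℝ) ^ n * (n.factorial : ℝ))) * (qp α 0 n).eval (-1))) := by
        have hT2' : Filter.Tendsto
            (fun t => ((-1 : ℝ) ^ n / ((2 : ℝ) ^ n * (n.factorial : ℝ))) * (qp α 0 n).eval t)
            (nhdsWithin (-1:ℝ) (Set.Ioo (-1:ℝ) 1))
            (nhds (((-1 : ℝ) ^ n / ((2 : ℝ) ^ n * (n.factorial : ℝ))) * (qp α 0 n).eval (-1))) := by
          apply Filter.Tendsto.mono_left _ nhdsWithin_le_nhds
          exact (continuous_const.mul (qp α 0 n).continuous).tendsto (-1)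
        apply hT2'.congr'
        apply Filter.eventuallyEq_of_mem self_mem_nhdsWithin
        intro s hs
        exact (jacobiP_eq α 0 n hs).symm
      exact tendsto_nhds_unique hT1 hT2
    rw [hval, abs_mul]
    have hcoef : |(-1 : ℝ) ^ n / ((2 : ℝ) ^ n * (n.factorial : ℝ))|
        = ((2 : ℝ) ^ n * (n.factorial : ℝ))⁻¹ := by
      have hfac : (0:ℝ) < (2:ℝ)^n * (n.factorial : ℝ) := by positivity
      rw [abs_div, abs_pow, abs_neg, abs_one, one_pow, abs_of_pos hfac]
      exact one_div _
    rw [hcoef, qp_eval_negone]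
    rw [abs_mul, abs_pow]
    have hff := ff_abs_le 0 n K (by simpa using hKβ)
    calc ((2 : ℝ) ^ n * (n.factorial : ℝ))⁻¹ * (|ff (0+(n:ℝ)) n| * |(2:ℝ)|^n)
        ≤ ((2 : ℝ) ^ n * (n.factorial : ℝ))⁻¹ * (((n.factorial : ℝ) * ((n:ℝ)+1)^K) * |(2:ℝ)|^n) := by
          apply mul_le_mul_of_nonneg_left (mul_le_mul_of_nonneg_right hff (by positivity))
            (by positivity)
      _ = ((n:ℝ)+1)^K := by
          rw [abs_of_pos (by norm_num : (0:ℝ) < 2)]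
          field_simp
  · have : jacobiP α β n (-1) = 0 := by
      unfold jacobiP
      rw [show (1:ℝ) + (-1) = 0 from by norm_num, Real.zero_rpow (neg_ne_zero.mpr hβ0)]
      ring
    rw [this, abs_zero]
    positivity

lemma jacobiP_bound (α β : ℝ) (hα : -1 < α) (hβ : -1 < β) (hmax : -(1/2 : ℝ) ≤ max α β)
    (n : ℕ) (hn : 1 ≤ n) (K : ℕ) (hKα : |α| ≤ K) (hKβ : |β| ≤ K)
    {t : ℝ} (ht : t ∈ Set.Icc (-1:ℝ) 1) :
    |jacobiP α β n t| ≤ ((n:ℝ)+1)^K := by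
  obtain ⟨ht1, ht2⟩ := ht
  rcases eq_or_lt_of_le ht1 with h | h
  · rw [← h]
    exact jacobiP_negone_bound α β hα hβ hmax n hn K hKα hKβ
  rcases eq_or_lt_of_le ht2 with h' | h'
  · rw [h']
    exact jacobiP_one_bound α β hα hβ hmax n hn K hKα hKβ
  · exact jacobiP_bound_Ioo α β hα hβ hmax n hn K hKα hKβ ⟨h, h'⟩

lemma jacobiP_zero_bound (α β : ℝ) {t : ℝ} (ht : t ∈ Set.Icc (-1:ℝ) 1) :
    |jacobiP α β 0 t| ≤ 1 := by
  obtain ⟨ht1, ht2⟩ := ht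
  have aux : ∀ (x γ : ℝ), 0 ≤ x → x ^ (-γ) * x ^ γ = 1 ∨ x ^ (-γ) * x ^ γ = 0 := by
    intro x γ hx
    rcases eq_or_lt_of_le hx with h | h
    · rcases eq_or_ne γ 0 with hγ | hγ
      · left; rw [hγ, neg_zero, Real.rpow_zero]; norm_num
      · right; rw [← h, Real.zero_rpow hγ]; ring
    · left
      rw [← Real.rpow_add h]
      norm_num
  have hval : jacobiP α β 0 t = ((1-t)^(-α) * (1-t)^α) * ((1+t)^(-β) * (1+t)^β) := by
    unfold jacobiP
    rw [iteratedDeriv_zero]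
    norm_num
    ring
  rw [hval]
  rcases aux (1-t) α (by linarith) with h1 | h1 <;>
    rcases aux (1+t) β (by linarith) with h2 | h2 <;>
    rw [h1, h2] <;> norm_num


lemma Gamma_shift (x : ℝ) (hx : 0 < x) (n : ℕ) :
    Real.Gamma (x + n) = Real.Gamma x * ∏ i ∈ Finset.range n, (x + i) := by
  induction n with
  | zero => simp
  | succ n ih =>
    have hxn : x + (n:ℝ) ≠ 0 := by positivity
    have : x + ((n:ℕ)+1:ℕ) = (x + n) + 1 := by push_cast; ring
    rw [this, Real.Gamma_add_one hxn, ih, Finset.prod_range_succ]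
    ring

lemma bernoulli_ratio (K : ℕ) (i : ℕ) :
    1 + (K:ℝ)/((i:ℝ)+1) ≤ (((i:ℝ)+2)/((i:ℝ)+1))^K := by
  have hx : (0:ℝ) < (i:ℝ)+1 := by positivity
  have hber : 1 + (K:ℝ) * (1/((i:ℝ)+1)) ≤ (1 + 1/((i:ℝ)+1))^K := by
    apply one_add_mul_le_pow
    have : (0:ℝ) ≤ 1/((i:ℝ)+1) := by positivity
    linarith
  have he : (1 + 1/((i:ℝ)+1)) = (((i:ℝ)+2))/(((i:ℝ)+1)) := by
    field_simp
    ring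
  rw [he] at hber
  calc 1 + (K:ℝ)/((i:ℝ)+1) = 1 + (K:ℝ) * (1/((i:ℝ)+1)) := by ring
    _ ≤ _ := hber

set_option maxHeartbeats 1000000 in
lemma norm_bound (α β : ℝ) (hα : -1 < α) (hβ : -1 < β) (hmax : -(1/2:ℝ) ≤ max α β) :
    ∃ C : ℝ, 0 < C ∧ ∃ k : ℕ, ∀ n : ℕ, 1 ≤ n →
      (2 * (n:ℝ) + α + β + 1) * Real.Gamma ((n:ℝ) + α + β + 1) * (n.factorial : ℝ) /
        ((2 : ℝ) ^ (α + β + 1) * Real.Gamma ((n:ℝ) + α + 1) * Real.Gamma ((n:ℝ) + β + 1))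
      ≤ C * ((n:ℝ)+1)^k := by
  have hab2 : (0:ℝ) < α+β+2 := by
    rcases le_max_iff.mp hmax with h | h <;> linarith
  have hα1 : (0:ℝ) < α+1 := by linarith
  have hβ1 : (0:ℝ) < β+1 := by linarith
  obtain ⟨K₁, hK₁⟩ : ∃ k : ℕ, (k:ℝ) = ⌈(β+1)*(α+2)/(α+1)⌉₊ := ⟨_, rfl⟩
  obtain ⟨K₂, hK₂⟩ : ∃ k : ℕ, (k:ℝ) = ⌈(|β|)*(β+2)/(β+1)⌉₊ := ⟨_, rfl⟩
  have hB : (0:ℝ) < (2:ℝ)^(α+β+1) := Real.rpow_pos_of_pos (by norm_num) _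
  have hGab : (0:ℝ) < Real.Gamma (α+β+2) := Real.Gamma_pos_of_pos hab2
  have hGα : (0:ℝ) < Real.Gamma (α+1) := Real.Gamma_pos_of_pos hα1
  have hGβ : (0:ℝ) < Real.Gamma (β+1) := Real.Gamma_pos_of_pos hβ1
  obtain ⟨Cst, hCst⟩ : ∃ C : ℝ,
      C = Real.Gamma (α+β+2) / ((2:ℝ)^(α+β+1) * Real.Gamma (α+1) * Real.Gamma (β+1)) := ⟨_, rfl⟩
  have hCstpos : 0 < Cst := by
    rw [hCst]
    apply div_pos hGab
    positivity
  refine ⟨Cst * (2*(|α+β+1|+2)), by positivity, K₁ + K₂ + 1, ?_⟩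
  intro n hn
  have hn1 : (1:ℝ) ≤ (n:ℝ) := by exact_mod_cast hn
  obtain ⟨P1, hP1⟩ : ∃ P : ℝ, P = ∏ i ∈ Finset.range n, (α+β+2+(i:ℝ)) := ⟨_, rfl⟩
  obtain ⟨P2, hP2⟩ : ∃ P : ℝ, P = ∏ i ∈ Finset.range n, (α+1+(i:ℝ)) := ⟨_, rfl⟩
  obtain ⟨P3, hP3⟩ : ∃ P : ℝ, P = ∏ i ∈ Finset.range n, (β+1+(i:ℝ)) := ⟨_, rfl⟩
  have hP1pos : 0 < P1 := hP1 ▸ Finset.prod_pos (fun i _ => by positivity)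
  have hP2pos : 0 < P2 := hP2 ▸ Finset.prod_pos (fun i _ => by positivity)
  have hP3pos : 0 < P3 := hP3 ▸ Finset.prod_pos (fun i _ => by positivity)
  obtain ⟨D, hD⟩ : ∃ d : ℝ, d = α+β+(n:ℝ)+1 := ⟨_, rfl⟩
  have hDpos : (0:ℝ) < D := by rw [hD]; linarith
  -- Gamma expansions
  have hGαn : Real.Gamma ((n:ℝ) + α + 1) = Real.Gamma (α+1) * P2 := by
    have := Gamma_shift (α+1) hα1 n
    rw [show (α+1) + (n:ℝ) = (n:ℝ) + α + 1 from by ring] at this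
    rw [this, ← hP2]
  have hGβn : Real.Gamma ((n:ℝ) + β + 1) = Real.Gamma (β+1) * P3 := by
    have := Gamma_shift (β+1) hβ1 n
    rw [show (β+1) + (n:ℝ) = (n:ℝ) + β + 1 from by ring] at this
    rw [this, ← hP3]
  have hGabn : Real.Gamma ((n:ℝ) + α + β + 1) * D = Real.Gamma (α+β+2) * P1 := by
    have hsh := Gamma_shift (α+β+2) hab2 (n-1)
    have hc : ((n-1 : ℕ):ℝ) = (n:ℝ) - 1 := by
      rw [Nat.cast_sub hn]; norm_num
    rw [hc, show (α+β+2) + ((n:ℝ)-1) = (n:ℝ) + α + β + 1 from by ring] at hsh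
    rw [hsh, hP1]
    have hsplit : ∏ i ∈ Finset.range n, (α+β+2+(i:ℝ))
        = (∏ i ∈ Finset.range (n-1), (α+β+2+(i:ℝ))) * (α+β+2+((n-1:ℕ):ℝ)) := by
      conv_lhs => rw [show n = (n-1)+1 from by omega]
      rw [Finset.prod_range_succ]
    rw [hsplit, hc, hD]
    ring
  have hPF : (n.factorial : ℝ) = ∏ i ∈ Finset.range n, ((i:ℝ)+1) := (prod_add_one n).symm
  -- main ratio bound
  have hratio : P1 * (n.factorial : ℝ) ≤ P2 * P3 * ((n:ℝ)+1)^(K₁+K₂) := by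
    rw [hPF, hP1, hP2, hP3]
    have hprod : (∏ i ∈ Finset.range n, (α+β+2+(i:ℝ))) * (∏ i ∈ Finset.range n, ((i:ℝ)+1))
        = ∏ i ∈ Finset.range n, ((α+β+2+(i:ℝ)) * ((i:ℝ)+1)) := by
      rw [Finset.prod_mul_distrib]
    rw [hprod]
    have htarget : ∏ i ∈ Finset.range n, ((α+1+(i:ℝ)) * (β+1+(i:ℝ)) * ((((i:ℝ)+2)/((i:ℝ)+1))^(K₁+K₂)))
        = (∏ i ∈ Finset.range n, (α+1+(i:ℝ))) * (∏ i ∈ Finset.range n, (β+1+(i:ℝ)))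
          * ((n:ℝ)+1)^(K₁+K₂) := by
      rw [Finset.prod_mul_distrib, Finset.prod_mul_distrib, Finset.prod_pow, prod_ratio]
    rw [← htarget]
    apply Finset.prod_le_prod
    · intro i _
      positivity
    · intro i _
      have hx : (0:ℝ) < (i:ℝ)+1 := by positivity
      have hc1 : (β+1)*(α+2)/(α+1) ≤ (K₁:ℝ) := by rw [hK₁]; exact Nat.le_ceil _
      have hc1' : (β+1)*(α+2) ≤ (K₁:ℝ)*(α+1) := by
        rw [div_le_iff₀ hα1] at hc1
        linarith
      have hc2 : (|β|)*(β+2)/(β+1) ≤ (K₂:ℝ) := by rw [hK₂]; exact Nat.le_ceil _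
      have hc2' : (|β|)*(β+2) ≤ (K₂:ℝ)*(β+1) := by
        rw [div_le_iff₀ hβ1] at hc2
        linarith
      have hb1 : (α+β+2+(i:ℝ)) ≤ (α+1+(i:ℝ)) * ((((i:ℝ)+2)/((i:ℝ)+1))^K₁) := by
        have hlin : (α+β+2+(i:ℝ)) ≤ (α+1+(i:ℝ)) * (1 + (K₁:ℝ)/((i:ℝ)+1)) := by
          have hi0 : (0:ℝ) ≤ (i:ℝ) := Nat.cast_nonneg i
          have ha1i : (0:ℝ) < α+1+(i:ℝ) := by linarith
          have hexp : ((i:ℝ)+1)*(α+1) ≤ (α+2)*(α+1+(i:ℝ)) := by nlinarith [sq_nonneg (α+1)]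
          have hf1 : (β+1)*(((i:ℝ)+1)*(α+1)) ≤ (β+1)*((α+2)*(α+1+(i:ℝ))) :=
            mul_le_mul_of_nonneg_left hexp (le_of_lt hβ1)
          have hf2 : ((β+1)*(α+2))*(α+1+(i:ℝ)) ≤ ((K₁:ℝ)*(α+1))*(α+1+(i:ℝ)) :=
            mul_le_mul_of_nonneg_right hc1' (le_of_lt ha1i)
          rw [show (α+1+(i:ℝ)) * (1 + (K₁:ℝ)/((i:ℝ)+1))
            = (α+1+(i:ℝ)) + ((α+1+(i:ℝ))*(K₁:ℝ))/((i:ℝ)+1) from by ring]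
          have h9 : (β+1) ≤ ((α+1+(i:ℝ))*(K₁:ℝ))/((i:ℝ)+1) := by
            rw [le_div_iff₀ hx]
            nlinarith [hf1, hf2, hα1]
          linarith
        calc (α+β+2+(i:ℝ)) ≤ (α+1+(i:ℝ)) * (1 + (K₁:ℝ)/((i:ℝ)+1)) := hlin
          _ ≤ (α+1+(i:ℝ)) * ((((i:ℝ)+2)/((i:ℝ)+1))^K₁) := by
              apply mul_le_mul_of_nonneg_left (bernoulli_ratio K₁ i) (by positivity)
      have hb2 : ((i:ℝ)+1) ≤ (β+1+(i:ℝ)) * ((((i:ℝ)+2)/((i:ℝ)+1))^K₂) := by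
        have hlin : ((i:ℝ)+1) ≤ (β+1+(i:ℝ)) * (1 + (K₂:ℝ)/((i:ℝ)+1)) := by
          have habs : -β ≤ |β| := neg_le_abs β
          have habs' : (0:ℝ) ≤ |β| := abs_nonneg β
          have hi0 : (0:ℝ) ≤ (i:ℝ) := Nat.cast_nonneg i
          have hb1i : (0:ℝ) < β+1+(i:ℝ) := by linarith
          have hexp : ((i:ℝ)+1)*(β+1) ≤ (β+2)*(β+1+(i:ℝ)) := by nlinarith [sq_nonneg (β+1)]
          have hf1 : (|β|)*(((i:ℝ)+1)*(β+1)) ≤ (|β|)*((β+2)*(β+1+(i:ℝ))) :=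
            mul_le_mul_of_nonneg_left hexp habs'
          have hf2 : ((|β|)*(β+2))*(β+1+(i:ℝ)) ≤ ((K₂:ℝ)*(β+1))*(β+1+(i:ℝ)) :=
            mul_le_mul_of_nonneg_right hc2' (le_of_lt hb1i)
          rw [show (β+1+(i:ℝ)) * (1 + (K₂:ℝ)/((i:ℝ)+1))
            = (β+1+(i:ℝ)) + ((β+1+(i:ℝ))*(K₂:ℝ))/((i:ℝ)+1) from by ring]
          have h9 : -β ≤ ((β+1+(i:ℝ))*(K₂:ℝ))/((i:ℝ)+1) := by
            rw [le_div_iff₀ hx]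
            have c0 : (-β) * (((i:ℝ)+1)*(β+1)) ≤ (|β|) * (((i:ℝ)+1)*(β+1)) :=
              mul_le_mul_of_nonneg_right habs (by positivity)
            have hchain : ((-β) * ((i:ℝ)+1)) * (β+1) ≤ ((β+1+(i:ℝ))*(K₂:ℝ)) * (β+1) := by
              calc ((-β) * ((i:ℝ)+1)) * (β+1) = (-β) * (((i:ℝ)+1)*(β+1)) := by ring
                _ ≤ (|β|) * (((i:ℝ)+1)*(β+1)) := c0
                _ ≤ (|β|) * ((β+2)*(β+1+(i:ℝ))) := hf1
                _ = ((|β|)*(β+2))*(β+1+(i:ℝ)) := by ring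
                _ ≤ ((K₂:ℝ)*(β+1))*(β+1+(i:ℝ)) := hf2
                _ = ((β+1+(i:ℝ))*(K₂:ℝ)) * (β+1) := by ring
            have := le_of_mul_le_mul_right hchain hβ1
            linarith
          linarith
        calc ((i:ℝ)+1) ≤ (β+1+(i:ℝ)) * (1 + (K₂:ℝ)/((i:ℝ)+1)) := hlin
          _ ≤ (β+1+(i:ℝ)) * ((((i:ℝ)+2)/((i:ℝ)+1))^K₂) := by
              apply mul_le_mul_of_nonneg_left (bernoulli_ratio K₂ i) (by positivity)
      calc (α+β+2+(i:ℝ)) * ((i:ℝ)+1)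
          ≤ ((α+1+(i:ℝ)) * ((((i:ℝ)+2)/((i:ℝ)+1))^K₁))
            * ((β+1+(i:ℝ)) * ((((i:ℝ)+2)/((i:ℝ)+1))^K₂)) := by
            apply mul_le_mul hb1 hb2 (by positivity) (by positivity)
        _ = (α+1+(i:ℝ)) * (β+1+(i:ℝ)) * ((((i:ℝ)+2)/((i:ℝ)+1))^(K₁+K₂)) := by
            rw [pow_add]
            ring
  -- front factor
  have hA : (0:ℝ) < 2*(n:ℝ)+α+β+1 := by linarith
  have hfront : (2*(n:ℝ)+α+β+1) ≤ D * (2*(|α+β+1|+2)) * ((n:ℝ)+1) := by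
    have h1 : α+β+1 ≤ |α+β+1| := le_abs_self _
    have h2 : (0:ℝ) ≤ |α+β+1| := abs_nonneg _
    have hD2 : (1:ℝ)/2 ≤ D := by
      rw [hD]
      rcases le_max_iff.mp hmax with h | h <;> linarith
    have e1 : 2*(n:ℝ)+α+β+1 ≤ (|α+β+1|+2) * ((n:ℝ)+1) := by
      nlinarith [mul_nonneg h2 (by linarith : (0:ℝ) ≤ (n:ℝ))]
    have e2 : ((1:ℝ)/2) * ((2*(|α+β+1|+2)) * ((n:ℝ)+1)) ≤ D * ((2*(|α+β+1|+2)) * ((n:ℝ)+1)) := by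
      apply mul_le_mul_of_nonneg_right hD2 (by positivity)
    calc 2*(n:ℝ)+α+β+1 ≤ (|α+β+1|+2) * ((n:ℝ)+1) := e1
      _ = ((1:ℝ)/2) * ((2*(|α+β+1|+2)) * ((n:ℝ)+1)) := by ring
      _ ≤ D * ((2*(|α+β+1|+2)) * ((n:ℝ)+1)) := e2
      _ = D * (2*(|α+β+1|+2)) * ((n:ℝ)+1) := by ring
  -- assemble
  have hEeq : (2 * (n:ℝ) + α + β + 1) * Real.Gamma ((n:ℝ) + α + β + 1) * (n.factorial : ℝ) /
        ((2 : ℝ) ^ (α + β + 1) * Real.Gamma ((n:ℝ) + α + 1) * Real.Gamma ((n:ℝ) + β + 1))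
      = Cst * ((2*(n:ℝ)+α+β+1) / D) * ((P1 * (n.factorial : ℝ)) / (P2 * P3)) := by
    rw [hGαn, hGβn]
    have hGG : Real.Gamma ((n:ℝ) + α + β + 1) = Real.Gamma (α+β+2) * P1 / D := by
      rw [← hGabn]
      field_simp
    rw [hGG, hCst]
    field_simp
  rw [hEeq]
  have hb1 : (2*(n:ℝ)+α+β+1) / D ≤ 2*(|α+β+1|+2) * ((n:ℝ)+1) := by
    rw [div_le_iff₀ hDpos]
    calc (2*(n:ℝ)+α+β+1) ≤ D * (2*(|α+β+1|+2)) * ((n:ℝ)+1) := hfront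
      _ = 2*(|α+β+1|+2) * ((n:ℝ)+1) * D := by ring
  have hb2 : (P1 * (n.factorial : ℝ)) / (P2 * P3) ≤ ((n:ℝ)+1)^(K₁+K₂) := by
    rw [div_le_iff₀ (by positivity)]
    calc P1 * (n.factorial : ℝ) ≤ P2 * P3 * ((n:ℝ)+1)^(K₁+K₂) := hratio
      _ = ((n:ℝ)+1)^(K₁+K₂) * (P2 * P3) := by ring
  have hfacpos : (0:ℝ) < (n.factorial : ℝ) := by positivity
  calc Cst * ((2*(n:ℝ)+α+β+1) / D) * ((P1 * (n.factorial : ℝ)) / (P2 * P3))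
      ≤ Cst * (2*(|α+β+1|+2) * ((n:ℝ)+1)) * (((n:ℝ)+1)^(K₁+K₂)) := by
        apply mul_le_mul
        · apply mul_le_mul_of_nonneg_left hb1 (le_of_lt hCstpos)
        · exact hb2
        · positivity
        · positivity
    _ = Cst * (2*(|α+β+1|+2)) * ((n:ℝ)+1)^(K₁+K₂+1) := by
        rw [pow_succ]
        ring

end Stmt13


open Stmt13 in
/-- Let `α, β > -1` with `max(α,β) ≥ -1/2`. Then the sequence of sup-norms of the normalised
Jacobi polynomials is slowly increasing: there are `C > 0` and `k ∈ ℕ` with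
`max_{t ∈ [-1,1]} |p_n^{(α,β)}(t)| ≤ C (1+n)^k` for all `n`. -/
theorem stmt13 (α β : ℝ) (hα : -1 < α) (hβ : -1 < β) (hmax : -(1/2 : ℝ) ≤ max α β) :
    ∃ C : ℝ, 0 < C ∧ ∃ k : ℕ, ∀ n : ℕ, ∀ t ∈ Set.Icc (-1 : ℝ) 1,
      |jacobip α β n t| ≤ C * (1 + (n : ℝ)) ^ k := by
  obtain ⟨C₁, hC₁, k₁, hnorm⟩ := norm_bound α β hα hβ hmax
  obtain ⟨K, hK⟩ : ∃ K : ℕ, K = max ⌈|α|⌉₊ ⌈|β|⌉₊ := ⟨_, rfl⟩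
  have hKα : |α| ≤ (K:ℝ) := by
    refine le_trans (Nat.le_ceil _) ?_
    exact_mod_cast hK ▸ le_max_left ⌈|α|⌉₊ ⌈|β|⌉₊
  have hKβ : |β| ≤ (K:ℝ) := by
    refine le_trans (Nat.le_ceil _) ?_
    exact_mod_cast hK ▸ le_max_right ⌈|α|⌉₊ ⌈|β|⌉₊
  obtain ⟨A0, hA0⟩ : ∃ A : ℝ, A = Real.sqrt ((2 * ((0:ℕ):ℝ) + α + β + 1) *
      Real.Gamma (((0:ℕ):ℝ) + α + β + 1) * ((0:ℕ).factorial : ℝ) /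
      ((2 : ℝ) ^ (α + β + 1) * Real.Gamma (((0:ℕ):ℝ) + α + 1) *
        Real.Gamma (((0:ℕ):ℝ) + β + 1))) := ⟨_, rfl⟩
  have hA0nn : 0 ≤ A0 := hA0 ▸ Real.sqrt_nonneg _
  refine ⟨A0 + Real.sqrt C₁ + 1, by positivity, K + k₁, ?_⟩
  intro n t ht
  rcases Nat.eq_zero_or_pos n with hn0 | hn
  · subst hn0
    have hb := jacobiP_zero_bound α β ht
    unfold jacobip
    rw [abs_mul, abs_of_nonneg (Real.sqrt_nonneg _)]
    have h1 : (1 + ((0:ℕ):ℝ))^(K + k₁) = 1 := by norm_num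
    rw [h1, mul_one]
    calc Real.sqrt _ * |jacobiP α β 0 t| ≤ A0 * 1 := by
          apply mul_le_mul _ hb (abs_nonneg _) hA0nn
          rw [hA0]
      _ ≤ A0 + Real.sqrt C₁ + 1 := by
          have := Real.sqrt_nonneg C₁
          linarith
  · have hP := jacobiP_bound α β hα hβ hmax n hn K hKα hKβ ht
    have hN := hnorm n hn
    have hsqrtN : Real.sqrt ((2 * (n:ℝ) + α + β + 1) * Real.Gamma ((n:ℝ) + α + β + 1) *
          (n.factorial : ℝ) / ((2 : ℝ) ^ (α + β + 1) * Real.Gamma ((n:ℝ) + α + 1) *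
          Real.Gamma ((n:ℝ) + β + 1)))
        ≤ Real.sqrt C₁ * ((n:ℝ)+1)^k₁ := by
      have h1x : (1:ℝ) ≤ ((n:ℝ)+1)^k₁ := one_le_pow₀ (le_add_of_nonneg_left (by positivity))
      calc Real.sqrt _ ≤ Real.sqrt (C₁ * ((n:ℝ)+1)^k₁) := Real.sqrt_le_sqrt hN
        _ = Real.sqrt C₁ * Real.sqrt (((n:ℝ)+1)^k₁) := Real.sqrt_mul (le_of_lt hC₁) _
        _ ≤ Real.sqrt C₁ * (((n:ℝ)+1)^k₁) := by
            apply mul_le_mul_of_nonneg_left _ (Real.sqrt_nonneg _)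
            calc Real.sqrt (((n:ℝ)+1)^k₁) ≤ Real.sqrt ((((n:ℝ)+1)^k₁)^2) := by
                  apply Real.sqrt_le_sqrt
                  nlinarith [h1x]
              _ = ((n:ℝ)+1)^k₁ := Real.sqrt_sq (by positivity)
    unfold jacobip
    rw [abs_mul, abs_of_nonneg (Real.sqrt_nonneg _)]
    have hsn : (0:ℝ) ≤ Real.sqrt C₁ := Real.sqrt_nonneg _
    calc Real.sqrt _ * |jacobiP α β n t|
        ≤ (Real.sqrt C₁ * ((n:ℝ)+1)^k₁) * (((n:ℝ)+1)^K) :=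
          mul_le_mul hsqrtN hP (abs_nonneg _) (by positivity)
      _ = Real.sqrt C₁ * (1 + (n:ℝ))^(K + k₁) := by
          rw [pow_add]
          ring_nf
      _ ≤ (A0 + Real.sqrt C₁ + 1) * (1 + (n:ℝ))^(K + k₁) := by
          apply mul_le_mul_of_nonneg_right (by linarith) (by positivity)
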